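/- Let Φ₁, Φ₂ : Mₙ(ℂ) → Mₙ(ℂ) be completely positive, trace-preserving, unital linear maps, and let X, Y ∈ Mₙ(ℂ) satisfy Φ₁(X) = Y and Φ₂(Y) = X. If Φ₁ has Kraus decomposition Φ₁(W) = Σᵢ Kᵢ W Kᵢ*, then Kᵢ X = Y Kᵢ for every i. -/

import Mathlib

open Matrix ComplexOrder

/-- A linear map `Φ : Mₙ(ℂ) → Mₘ(ℂ)` is completely positive if for every `l`,
`id_{M_l} ⊗ Φ` maps positive semidefinite matrices to positive semidefinite matrices. -/
def IsCompletelyPositive {n m : Type*} [Fintype n] [Fintype m]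
    (Φ : Matrix n n ℂ →ₗ[ℂ] Matrix m m ℂ) : Prop :=
  ∀ (l : ℕ) (M : Matrix (Fin l × n) (Fin l × n) ℂ), M.PosSemidef →
    (Matrix.of fun p q : Fin l × m =>
      Φ (Matrix.of fun x y => M (p.1, x) (q.1, y)) p.2 q.2).PosSemidef

/-- Reindexing equivalence between a sum of two copies and `Fin 2 × _`. -/
def sumEquivTwo (N : Type*) : (N ⊕ N) ≃ (Fin 2 × N) where
  toFun := Sum.elim (fun x => (0, x)) (fun x => (1, x))
  invFun p := if p.1 = 0 then Sum.inl p.2 else Sum.inr p.2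
  left_inv s := by cases s <;> simp
  right_inv p := by
    obtain ⟨i, x⟩ := p
    fin_cases i <;> simp

lemma psd_trace_nonneg {N : Type*} [Fintype N] [DecidableEq N] {M : Matrix N N ℂ}
    (h : M.PosSemidef) : 0 ≤ M.trace := by
  rw [Matrix.trace]
  apply Finset.sum_nonneg
  intro i _
  have := h.dotProduct_mulVec_nonneg (Pi.single i 1)
  simpa [Matrix.mulVec_single, dotProduct, Pi.single_apply, Matrix.diag,
    Finset.sum_ite_eq', apply_ite] using this

lemma eq_zero_of_trace_self_mul_conjTranspose {N : Type*} [Fintype N] [DecidableEq N]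
    (M : Matrix N N ℂ) (h : (M * Mᴴ).trace = 0) : M = 0 := by
  have htr : (M * Mᴴ).trace = ((∑ i, ∑ j, Complex.normSq (M i j) : ℝ) : ℂ) := by
    simp only [Matrix.trace, Matrix.diag, Matrix.mul_apply, Matrix.conjTranspose_apply]
    push_cast
    refine Finset.sum_congr rfl fun i _ => Finset.sum_congr rfl fun j _ => ?_
    rw [← Complex.mul_conj]
    rfl
  rw [htr] at h
  have h0 : (∑ i, ∑ j, Complex.normSq (M i j) : ℝ) = 0 := by exact_mod_cast h
  ext i j
  have h1 : ∀ i ∈ Finset.univ, (0:ℝ) ≤ ∑ j, Complex.normSq (M i j) :=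
    fun i _ => Finset.sum_nonneg fun j _ => Complex.normSq_nonneg _
  have h2 := (Finset.sum_eq_zero_iff_of_nonneg h1).mp h0 i (Finset.mem_univ i)
  have h3 := (Finset.sum_eq_zero_iff_of_nonneg
    (fun j _ => Complex.normSq_nonneg (M i j))).mp h2 j (Finset.mem_univ j)
  simpa using Complex.normSq_eq_zero.mp h3

/-- Kadison–Schwarz inequality for unital completely positive maps. -/
lemma kadison_schwarz {N : Type*} [Fintype N] [DecidableEq N]
    (Φ : Matrix N N ℂ →ₗ[ℂ] Matrix N N ℂ) (hcp : IsCompletelyPositive Φ)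
    (hu : Φ 1 = 1) (A : Matrix N N ℂ) :
    (Φ (A * Aᴴ) - Φ A * (Φ A)ᴴ).PosSemidef := by
  classical
  set B : Fin 2 → Matrix N N ℂ := ![A, 1] with hB
  set M : Matrix (Fin 2 × N) (Fin 2 × N) ℂ :=
    Matrix.of fun p q => (B p.1 * (B q.1)ᴴ) p.2 q.2 with hM
  have hMpsd : M.PosSemidef := by
    have : M = (Matrix.of fun (p : Fin 2 × N) (k : N) => B p.1 p.2 k) *
        (Matrix.of fun (p : Fin 2 × N) (k : N) => B p.1 p.2 k)ᴴ := by
      ext p q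
      simp [hM, Matrix.mul_apply, Matrix.conjTranspose_apply]
    rw [this]
    exact Matrix.posSemidef_self_mul_conjTranspose _
  have hinner : ∀ p q : Fin 2, (Matrix.of fun x y => M (p, x) (q, y)) = B p * (B q)ᴴ := by
    intro p q; ext x y; simp [hM]
  have hM' := hcp 2 M hMpsd
  set M' : Matrix (Fin 2 × N) (Fin 2 × N) ℂ :=
    Matrix.of fun p q => Φ (Matrix.of fun x y => M (p.1, x) (q.1, y)) p.2 q.2 with hM'def
  have hentry : ∀ (p q : Fin 2) (x y : N), M' (p, x) (q, y) = Φ (B p * (B q)ᴴ) x y := by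
    intro p q x y
    simp only [hM'def, Matrix.of_apply]
    rw [hinner]
  -- Φ(Aᴴ) = (Φ A)ᴴ from hermiticity of M'
  have hstar : Φ Aᴴ = (Φ A)ᴴ := by
    ext x y
    have := congrFun (congrFun hM'.1 ((1 : Fin 2), x)) ((0 : Fin 2), y)
    rw [Matrix.conjTranspose_apply] at this
    rw [hentry, hentry] at this
    simp only [hB] at this
    simp only [Matrix.cons_val_zero, Matrix.cons_val_one, Matrix.head_cons,
      Matrix.conjTranspose_one, mul_one, Matrix.one_mul] at this
    rw [Matrix.conjTranspose_apply, ← this]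
  -- assemble the block matrix
  have hsub : M'.submatrix (sumEquivTwo N) (sumEquivTwo N) =
      Matrix.fromBlocks (Φ (A * Aᴴ)) (Φ A) (Φ A)ᴴ 1 := by
    ext p q
    cases p with
    | inl x =>
      cases q with
      | inl y =>
        show M' ((0 : Fin 2), x) ((0 : Fin 2), y) = _
        rw [hentry]; simp [hB]
      | inr y =>
        show M' ((0 : Fin 2), x) ((1 : Fin 2), y) = _
        rw [hentry]; simp [hB]
    | inr x =>
      cases q with
      | inl y =>
        show M' ((1 : Fin 2), x) ((0 : Fin 2), y) = _
        rw [hentry]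
        simp only [hB, Matrix.cons_val_zero, Matrix.cons_val_one, Matrix.head_cons,
          Matrix.conjTranspose_one, Matrix.one_mul]
        rw [hstar]
        simp [Matrix.fromBlocks]
      | inr y =>
        show M' ((1 : Fin 2), x) ((1 : Fin 2), y) = _
        rw [hentry]
        simp [hB, hu, Matrix.fromBlocks]
  have hblocks : (Matrix.fromBlocks (Φ (A * Aᴴ)) (Φ A) (Φ A)ᴴ (1 : Matrix N N ℂ)).PosSemidef := by
    rw [← hsub]
    exact (Matrix.posSemidef_submatrix_equiv (sumEquivTwo N)).mpr hM'
  have h1 : (1 : Matrix N N ℂ).PosDef := Matrix.PosDef.one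
  haveI : Invertible (1 : Matrix N N ℂ) := invertibleOne
  have := (Matrix.PosDef.fromBlocks₂₂ (Φ (A * Aᴴ)) (Φ A) h1).mp hblocks
  simpa using this

/-- If `Φ₁, Φ₂ : Mₙ(ℂ) → Mₙ(ℂ)` are completely positive, trace-preserving,
unital linear maps, `Φ₁(X) = Y`, `Φ₂(Y) = X`, and `Φ₁` has Kraus decomposition
`Φ₁(W) = Σᵢ Kᵢ W Kᵢ*`, then `Kᵢ X = Y Kᵢ` for every `i`. -/
theorem stmt2 (n : ℕ)
    (Φ₁ Φ₂ : Matrix (Fin n) (Fin n) ℂ →ₗ[ℂ] Matrix (Fin n) (Fin n) ℂ)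
    (hcp1 : IsCompletelyPositive Φ₁) (hcp2 : IsCompletelyPositive Φ₂)
    (htp1 : ∀ W, (Φ₁ W).trace = W.trace) (htp2 : ∀ W, (Φ₂ W).trace = W.trace)
    (hu1 : Φ₁ 1 = 1) (hu2 : Φ₂ 1 = 1)
    (X Y : Matrix (Fin n) (Fin n) ℂ) (hXY : Φ₁ X = Y) (hYX : Φ₂ Y = X)
    (ι : Type) [Fintype ι] (K : ι → Matrix (Fin n) (Fin n) ℂ)
    (hK : ∀ W, Φ₁ W = ∑ i, K i * W * (K i)ᴴ) :
    ∀ i, K i * X = Y * K i := by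
  classical
  -- Kraus facts
  have hKK : ∑ i, K i * (K i)ᴴ = 1 := by
    have := hK 1
    rw [hu1] at this
    simpa using this.symm
  have hstar1 : Φ₁ Xᴴ = Yᴴ := by
    rw [hK Xᴴ, ← hXY, hK X]
    rw [Matrix.conjTranspose_sum]
    refine Finset.sum_congr rfl fun i _ => ?_
    simp [Matrix.conjTranspose_mul, mul_assoc]
  -- the sum of PSD matrices
  set S : Matrix (Fin n) (Fin n) ℂ :=
    ∑ i, (K i * X - Y * K i) * (K i * X - Y * K i)ᴴ with hS
  have hSeq : S = Φ₁ (X * Xᴴ) - Y * Yᴴ := by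
    have expand : ∀ i : ι, (K i * X - Y * K i) * (K i * X - Y * K i)ᴴ =
        K i * (X * Xᴴ) * (K i)ᴴ - (K i * X * (K i)ᴴ) * Yᴴ
          - Y * (K i * Xᴴ * (K i)ᴴ) + Y * (K i * (K i)ᴴ) * Yᴴ := by
      intro i
      simp only [Matrix.conjTranspose_sub, Matrix.conjTranspose_mul]
      noncomm_ring
    rw [hS]
    simp only [expand, Finset.sum_add_distrib, Finset.sum_sub_distrib, ← Finset.sum_mul,
      ← Finset.mul_sum, ← hK, hXY, hstar1, ← Matrix.mul_sum]
    rw [hKK, mul_one]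
    abel
  -- trace equality
  have hle1 : (Y * Yᴴ).trace ≤ (X * Xᴴ).trace := by
    have h := psd_trace_nonneg (kadison_schwarz Φ₁ hcp1 hu1 X)
    rw [Matrix.trace_sub, htp1, hXY] at h
    exact sub_nonneg.mp h
  have hle2 : (X * Xᴴ).trace ≤ (Y * Yᴴ).trace := by
    have h := psd_trace_nonneg (kadison_schwarz Φ₂ hcp2 hu2 Y)
    rw [Matrix.trace_sub, htp2, hYX] at h
    exact sub_nonneg.mp h
  have htreq : (X * Xᴴ).trace = (Y * Yᴴ).trace := le_antisymm hle2 hle1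
  have hStr : S.trace = 0 := by
    rw [hSeq, Matrix.trace_sub, htp1, htreq, sub_self]
  have hterm : ∀ i ∈ Finset.univ,
      (0:ℂ) ≤ ((K i * X - Y * K i) * (K i * X - Y * K i)ᴴ).trace :=
    fun i _ => psd_trace_nonneg (Matrix.posSemidef_self_mul_conjTranspose _)
  have hsum0 : (∑ i, ((K i * X - Y * K i) * (K i * X - Y * K i)ᴴ).trace) = 0 := by
    rw [← Matrix.trace_sum]; exact hStr
  intro i
  have h0 := (Finset.sum_eq_zero_iff_of_nonneg hterm).mp hsum0 i (Finset.mem_univ i)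
  have := eq_zero_of_trace_self_mul_conjTranspose _ h0
  exact sub_eq_zero.mp this
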